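/- arXiv:2012.08735 — 3 statements merged into one kernel-verified Lean document; each statement's English description precedes it below -/
import Mathlib

section
/- For any function f : {-1,1}^n → {-1,1}, noise rate p ∈ (0,1), and coordinate i, the score of coordinate i is nonnegative: NS_p(f) − E_{b ∈ {-1,1}}[NS_p(f_{x_i = b})] ≥ 0. -/
open Finset

attribute [local instance] Classical.propDecidable

namespace DTR

noncomputable section

/-- ±1 real value of a Boolean. -/
def toR (b : Bool) : ℝ := if b then 1 else -1

/-- Average (expectation under the uniform distribution) of a real-valued
function on `{-1,1}^n` (encoded as `Fin n → Bool`). -/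
def avg (n : ℕ) (g : (Fin n → Bool) → ℝ) : ℝ := (∑ x : Fin n → Bool, g x) / 2 ^ n

/-- Mean `E[f]` of a ±1-valued Boolean function. -/
def mean (n : ℕ) (f : (Fin n → Bool) → Bool) : ℝ := avg n fun x => toR (f x)

/-- Sign of a real number, as ±1 (with sign(0) = 1). -/
def sgn (e : ℝ) : ℝ := if 0 ≤ e then 1 else -1

/-- Normalized Hamming distance `Pr_x[f(x) ≠ g(x)]` under the uniform distribution. -/
def distB (n : ℕ) (f g : (Fin n → Bool) → Bool) : ℝ :=
  avg n fun x => if f x = g x then 0 else 1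

/-- The `p`-noisy copy of `x` determined by the rerandomization pattern `r`
(coordinates where `r i = true` are rerandomized) and fresh bits `z`. -/
def noisy (n : ℕ) (x r z : Fin n → Bool) : Fin n → Bool := fun i => if r i then z i else x i

/-- Probability of the rerandomization pattern `r` at noise rate `p`. -/
def wt (n : ℕ) (p : ℝ) (r : Fin n → Bool) : ℝ := ∏ i : Fin n, (if r i then p else 1 - p)

/-- Noise sensitivity `NS_p(f) = Pr[f(x) ≠ f(y)]`, `x` uniform, `y` a `p`-noisy copy of `x`. -/
def NS (n : ℕ) (p : ℝ) (f : (Fin n → Bool) → Bool) : ℝ :=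
  (∑ x : Fin n → Bool, ∑ r : Fin n → Bool, ∑ z : Fin n → Bool,
      wt n p r * (if f x = f (noisy n x r z) then 0 else 1)) / (2 ^ n * 2 ^ n)

/-- Restriction `f_{x_i = b}` of `f`, fixing coordinate `i` to `b`. -/
def restr (n : ℕ) (f : (Fin n → Bool) → Bool) (i : Fin n) (b : Bool) :
    (Fin n → Bool) → Bool := fun x => f (Function.update x i b)

/-- `Score_i(f,p) = NS_p(f) − E_b[NS_p(f_{x_i=b})]`. -/
def score (n : ℕ) (p : ℝ) (f : (Fin n → Bool) → Bool) (i : Fin n) : ℝ :=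
  NS n p f - (NS n p (restr n f i true) + NS n p (restr n f i false)) / 2

/-- Discrete derivative `D_i g(x) = (g(x^{i=1}) − g(x^{i=-1}))/2` of a real-valued function. -/
def Dder (n : ℕ) (g : (Fin n → Bool) → ℝ) (i : Fin n) (x : Fin n → Bool) : ℝ :=
  (g (Function.update x i true) - g (Function.update x i false)) / 2

/-- `p`-smoothed version `f̃(x) = E_{y ∼_p x}[f(y)]` of a Boolean function `f`. -/
def smooth (n : ℕ) (p : ℝ) (f : (Fin n → Bool) → Bool) (x : Fin n → Bool) : ℝ :=
  (∑ r : Fin n → Bool, ∑ z : Fin n → Bool, wt n p r * toR (f (noisy n x r z))) / 2 ^ n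

/-- Fourier coefficient `f̂(S) = E[f(x) · χ_S(x)]`. -/
def fourier (n : ℕ) (f : (Fin n → Bool) → Bool) (S : Finset (Fin n)) : ℝ :=
  avg n fun x => toR (f x) * ∏ i ∈ S, toR (x i)

/-- Total influence `Inf(g) = Σ_i Pr[g(x) ≠ g(x^{⊕i})]`. -/
def totalInf (n : ℕ) (g : (Fin n → Bool) → Bool) : ℝ :=
  ∑ i : Fin n, avg n fun x => if g x = g (Function.update x i (!x i)) then 0 else 1

/-- Decision trees over `{-1,1}^n`. -/
inductive DTree (n : ℕ) where
  | leaf : Bool → DTree n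
  | node : Fin n → DTree n → DTree n → DTree n

namespace DTree

def eval {n : ℕ} : DTree n → (Fin n → Bool) → Bool
  | .leaf b, _ => b
  | .node i l r, x => if x i then eval r x else eval l x

/-- Number of leaves (the size of the tree). -/
def leaves {n : ℕ} : DTree n → ℕ
  | .leaf _ => 1
  | .node _ l r => leaves l + leaves r

/-- Depth of the leaf reached by input `x`. -/
def depthOn {n : ℕ} : DTree n → (Fin n → Bool) → ℕ
  | .leaf _, _ => 0
  | .node i l r, x => (if x i then depthOn r x else depthOn l x) + 1

/-- Whether the tree queries variable `i` on input `x`. -/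
def queries {n : ℕ} : DTree n → (Fin n → Bool) → Fin n → Bool
  | .leaf _, _, _ => false
  | .node j l r, x, i => (i == j) || (if x j then queries r x i else queries l x i)

/-- The tree never re-queries a variable already queried on the path
(given the set `s` of forbidden variables). -/
def noRepeat {n : ℕ} : DTree n → Finset (Fin n) → Prop
  | .leaf _, _ => True
  | .node i l r, s => i ∉ s ∧ noRepeat l (insert i s) ∧ noRepeat r (insert i s)

def depth {n : ℕ} : DTree n → ℕ
  | .leaf _ => 0
  | .node _ l r => max (depth l) (depth r) + 1

end DTree

/-- `opt_s(g)`: distance of `g` to the closest decision tree of size at most `s`. -/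
def opt (n : ℕ) (s : ℕ) (g : (Fin n → Bool) → Bool) : ℝ :=
  sInf {e : ℝ | ∃ T : DTree n, T.leaves ≤ s ∧ distB n g T.eval = e}


/-!
Put `h = toR ∘ f` and, for a set `r` of rerandomized coordinates,
`K_r(h) = ∑ x, ∑ z, h x * h (noisy x r z)`. Since `NS_p(f) = (1 - 4⁻ⁿ ∑ r, wt r * K_r(h)) / 2`,
it suffices to show `2 K_r(h) ≤ K_r(h_T) + K_r(h_F)` for every `r`, where `h_b` fixes
coordinate `i` to `b`. If `i ∉ r`, the two points share coordinate `i` and this is an equality.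
If `i ∈ r`, averaging `x` and `z` over their `i`-th coordinates gives `4 K_r(h) = K_r(h_T + h_F)`,
and the parallelogram law leaves the gap `K_r(h_T - h_F) / 2`. Finally every `K_r` is a positive
semidefinite form: the swap `(x, z) ↦ (noisy x r z, noisy z r x)` is an involution, which yields
`2ⁿ K_r(g) = ∑ x, (∑ z, g (noisy x r z))²`.
-/

open Function

section Noisy

variable {n : ℕ} (x r z : Fin n → Bool) {i : Fin n}

lemma noisy_noisy_left (w : Fin n → Bool) : noisy n (noisy n x r z) r w = noisy n x r w := by
  funext j; unfold noisy; cases r j <;> rfl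

lemma noisy_noisy_swap : noisy n (noisy n x r z) r (noisy n z r x) = x := by
  funext j; unfold noisy; cases r j <;> rfl

variable {x r z}

lemma noisy_update_of_true (hi : r i = true) (b : Bool) :
    noisy n (update x i b) r z = noisy n x r z := by
  funext j
  by_cases hj : j = i
  · subst hj; simp [noisy, hi]
  · simp [noisy, update_of_ne hj]

lemma update_noisy_of_true (hi : r i = true) (c : Bool) :
    update (noisy n x r z) i c = noisy n x r (update z i c) := by
  funext j
  by_cases hj : j = i
  · subst hj; simp [noisy, hi]
  · simp [noisy, update_of_ne hj]

lemma update_noisy_of_false (hi : r i = false) (b : Bool) :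
    update (noisy n x r z) i b = noisy n (update x i b) r z := by
  funext j
  by_cases hj : j = i
  · subst hj; simp [noisy, hi]
  · simp [noisy, update_of_ne hj]

end Noisy

lemma sum_update_true_add_update_false {n : ℕ} {M : Type*} [AddCommMonoid M] (i : Fin n)
    (u : (Fin n → Bool) → M) :
    ∑ x, (u (update x i true) + u (update x i false)) = 2 • ∑ x, u x := by
  have flip : Involutive fun x : Fin n → Bool => update x i (!x i) := by
    intro x; funext j; by_cases hj : j = i <;> simp [hj]
  calc ∑ x, (u (update x i true) + u (update x i false))
      = ∑ x, (u x + u (update x i (!x i))) := by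
        refine sum_congr rfl fun x _ => ?_
        cases hx : x i
        · rw [add_comm, ← hx, update_eq_self, hx]; rfl
        · rw [← hx, update_eq_self, hx]; rfl
    _ = 2 • ∑ x, u x := by
        rw [sum_add_distrib, two_nsmul]
        congr 1
        exact Equiv.sum_comp (flip.toPerm _) u

lemma sum_sum_noisy_swap {n : ℕ} {M : Type*} [AddCommMonoid M] (r : Fin n → Bool)
    (Φ : (Fin n → Bool) → (Fin n → Bool) → M) :
    ∑ x, ∑ z, Φ (noisy n x r z) (noisy n z r x) = ∑ x, ∑ z, Φ x z := by
  have swap : Involutive fun q : (Fin n → Bool) × (Fin n → Bool) =>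
      (noisy n q.1 r q.2, noisy n q.2 r q.1) := fun q => by
    ext1 <;> exact noisy_noisy_swap _ _ _
  simp only [← Fintype.sum_prod_type']
  exact Equiv.sum_comp (swap.toPerm _) fun q => Φ q.1 q.2

def restrReal {n : ℕ} (h : (Fin n → Bool) → ℝ) (i : Fin n) (b : Bool) : (Fin n → Bool) → ℝ :=
  fun x => h (update x i b)

-- `4 ^ n · E[h x * h y]` conditioned on `r` being exactly the set of rerandomized coordinates
def patternCorr {n : ℕ} (r : Fin n → Bool) (h : (Fin n → Bool) → ℝ) : ℝ :=
  ∑ x, ∑ z, h x * h (noisy n x r z)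

section patternCorr

variable {n : ℕ} (r : Fin n → Bool) (h : (Fin n → Bool) → ℝ)

lemma two_pow_mul_patternCorr :
    2 ^ n * patternCorr r h = ∑ x, (∑ z, h (noisy n x r z)) ^ 2 := by
  set S := fun x => ∑ z, h (noisy n x r z)
  have hS : ∀ x z, S (noisy n x r z) = S x := fun x z => by
    simp only [S, noisy_noisy_left]
  calc 2 ^ n * patternCorr r h = ∑ x, ∑ _z : Fin n → Bool, S x * h x := by
        simp [patternCorr, S, sum_const, mul_sum, mul_comm]
    _ = ∑ x, ∑ z, S (noisy n x r z) * h (noisy n (noisy n x r z) r (noisy n z r x)) := by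
        simp only [hS, noisy_noisy_swap]
    _ = ∑ x, ∑ z, S x * h (noisy n x r z) :=
        sum_sum_noisy_swap r fun a b => S a * h (noisy n a r b)
    _ = ∑ x, S x ^ 2 := by simp only [S, sq, mul_sum]

lemma patternCorr_nonneg : 0 ≤ patternCorr r h := by
  have h2 : 0 ≤ 2 ^ n * patternCorr r h :=
    two_pow_mul_patternCorr r h ▸ sum_nonneg fun x _ => sq_nonneg _
  exact (mul_nonneg_iff_of_pos_left (by positivity)).1 h2

lemma patternCorr_add_add_patternCorr_sub (a b : (Fin n → Bool) → ℝ) :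
    patternCorr r (a + b) + patternCorr r (a - b) = 2 * patternCorr r a + 2 * patternCorr r b := by
  simp only [patternCorr, mul_sum, ← sum_add_distrib, Pi.add_apply, Pi.sub_apply]
  exact sum_congr rfl fun x _ => sum_congr rfl fun z _ => by ring

variable {r} {i : Fin n}

lemma patternCorr_restrReal_add_of_false (hi : r i = false) :
    patternCorr r (restrReal h i true) + patternCorr r (restrReal h i false) =
      2 * patternCorr r h := by
  set G := fun x => ∑ z, h x * h (noisy n x r z)
  calc _ = ∑ x, (G (update x i true) + G (update x i false)) := by
        simp only [G, patternCorr, restrReal, update_noisy_of_false hi, sum_add_distrib]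
    _ = 2 * patternCorr r h := by
        rw [sum_update_true_add_update_false, two_nsmul, two_mul]; rfl

lemma four_mul_patternCorr_of_true (hi : r i = true) :
    4 * patternCorr r h = patternCorr r (restrReal h i true + restrReal h i false) := by
  set S := fun x => ∑ z, h (noisy n x r z)
  have hx : 2 * patternCorr r h = ∑ x, (restrReal h i true x + restrReal h i false x) * S x := by
    calc 2 * patternCorr r h
        = ∑ x, ((h * S) (update x i true) + (h * S) (update x i false)) := by
          rw [sum_update_true_add_update_false, two_nsmul, two_mul]
          simp only [patternCorr, S, Pi.mul_apply, mul_sum]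
      _ = _ := by simp only [S, Pi.mul_apply, noisy_update_of_true hi, restrReal, add_mul]
  have hz : ∀ x, 2 * S x = ∑ z, (restrReal h i true + restrReal h i false) (noisy n x r z) := by
    intro x
    have := sum_update_true_add_update_false i fun z => h (noisy n x r z)
    simp only [← update_noisy_of_true hi] at this
    simp only [S, restrReal, Pi.add_apply, this, nsmul_eq_mul, Nat.cast_ofNat]
  calc 4 * patternCorr r h
      = ∑ x, (restrReal h i true x + restrReal h i false x) * (2 * S x) := by
        rw [show (4 : ℝ) = 2 * 2 by norm_num, mul_assoc, hx, mul_sum]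
        exact sum_congr rfl fun x _ => by ring
    _ = _ := by simp only [hz, patternCorr, mul_sum, Pi.add_apply]

lemma two_mul_patternCorr_le :
    2 * patternCorr r h ≤
      patternCorr r (restrReal h i true) + patternCorr r (restrReal h i false) := by
  cases hi : r i
  · exact (patternCorr_restrReal_add_of_false h hi).ge
  · have hsum := four_mul_patternCorr_of_true h hi
    have hpar := patternCorr_add_add_patternCorr_sub r (restrReal h i true) (restrReal h i false)
    have hdiff := patternCorr_nonneg r (restrReal h i true - restrReal h i false)
    linarith

end patternCorr

lemma wt_nonneg {n : ℕ} {p : ℝ} (hp0 : 0 ≤ p) (hp1 : p ≤ 1) (r : Fin n → Bool) :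
    0 ≤ wt n p r :=
  prod_nonneg fun j _ => by split <;> linarith

lemma sum_wt_eq_one (n : ℕ) (p : ℝ) : ∑ r, wt n p r = 1 := by
  unfold wt
  rw [← Fintype.prod_sum fun (_ : Fin n) (b : Bool) => if b then p else 1 - p]
  simp

def noiseCorr {n : ℕ} (p : ℝ) (h : (Fin n → Bool) → ℝ) : ℝ :=
  ∑ r, wt n p r * patternCorr r h

lemma two_mul_noiseCorr_le {n : ℕ} {p : ℝ} (hp0 : 0 ≤ p) (hp1 : p ≤ 1)
    (h : (Fin n → Bool) → ℝ) (i : Fin n) :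
    2 * noiseCorr p h ≤ noiseCorr p (restrReal h i true) + noiseCorr p (restrReal h i false) := by
  simp only [noiseCorr, mul_sum, ← sum_add_distrib, ← mul_add]
  refine sum_le_sum fun r _ => ?_
  rw [mul_left_comm]
  exact mul_le_mul_of_nonneg_left (two_mul_patternCorr_le h) (wt_nonneg hp0 hp1 r)

lemma NS_eq (n : ℕ) (p : ℝ) (f : (Fin n → Bool) → Bool) :
    NS n p f = (1 - noiseCorr p (fun x => toR (f x)) / (2 ^ n * 2 ^ n)) / 2 := by
  have hind : ∀ a b : Bool, (if a = b then (0 : ℝ) else 1) = (1 - toR a * toR b) / 2 := by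
    intro a b; cases a <;> cases b <;> norm_num [toR]
  have hwt : ∑ _x : Fin n → Bool, ∑ r, ∑ _z : Fin n → Bool, wt n p r = 2 ^ n * 2 ^ n := by
    simp [sum_const, ← mul_sum, sum_wt_eq_one]
  have hcorr : noiseCorr p (fun x => toR (f x)) =
      ∑ x, ∑ r, ∑ z, wt n p r * (toR (f x) * toR (f (noisy n x r z))) := by
    simp only [noiseCorr, patternCorr, mul_sum]
    exact sum_comm
  have hnum : ∑ x, ∑ r, ∑ z, wt n p r * (if f x = f (noisy n x r z) then (0 : ℝ) else 1) =
      (2 ^ n * 2 ^ n - noiseCorr p (fun x => toR (f x))) / 2 := by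
    rw [hcorr, ← hwt]
    simp only [hind, ← sum_sub_distrib, sum_div]
    exact sum_congr rfl fun x _ => sum_congr rfl fun r _ => sum_congr rfl fun z _ => by ring
  rw [NS, hnum]
  field_simp

lemma score_eq (n : ℕ) (p : ℝ) (f : (Fin n → Bool) → Bool) (i : Fin n) :
    score n p f i = (noiseCorr p (restrReal (fun x => toR (f x)) i true) +
      noiseCorr p (restrReal (fun x => toR (f x)) i false) -
        2 * noiseCorr p (fun x => toR (f x))) / (4 * (2 ^ n * 2 ^ n)) := by
  have hrestr : ∀ b, restrReal (fun x => toR (f x)) i b = fun x => toR (restr n f i b x) :=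
    fun _ => rfl
  simp only [score, NS_eq, hrestr]
  field_simp
  ring

/-- scores are nonnegative:
`NS_p(f) − E_b[NS_p(f_{x_i=b})] ≥ 0`. -/
theorem stmt4 (n : ℕ) (p : ℝ) (hp0 : 0 < p) (hp1 : p < 1)
    (f : (Fin n → Bool) → Bool) (i : Fin n) :
    0 ≤ score n p f i := by
  rw [score_eq]
  have key := two_mul_noiseCorr_le hp0.le hp1.le (fun x => toR (f x)) i
  exact div_nonneg (by linarith) (by positivity)

end

end DTR
end

section
/- The output of the unbiased score estimator is correct in expectation: for f : {-1,1}^n → {-1,1}, p ∈ (0,1), x uniform, y a p-noisy copy of x, and η_i = 1[f(x) ≠ f(y)] · (1 − (1/(1 − p/2)) · 1[x_i = y_i]), one has E[η_i] = Score_i(f, p) for every i ∈ [n]. -/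
/-!
Conditioned on `x i = y i = b`, the disagreement event `f x ≠ f y` is the event
`f_{x_i=b} x ≠ f_{x_i=b} y`, which does not involve coordinate `i` at all, while coordinate `i`
is independent of the others and `Pr[x i = y i = b] = (1 - p/2)/2`. Hence
`E[1[f x ≠ f y] · 1[x i = y i]] = (1 - p/2) · E_b[NS_p(f_{x_i=b})]`, and the estimator is
`NS_p(f)` minus this quantity rescaled by `1/(1 - p/2)`.
-/

open Finset

attribute [local instance] Classical.propDecidable

namespace DTR

noncomputable section

theorem sum_prod_weight_mul_apply_of_dependsOn {ι β : Type*} [Fintype ι] [DecidableEq ι]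
    [Fintype β] (w c : β → ℝ) (G : (ι → β) → ℝ) (i : ι) (hG : DependsOn G {i}ᶜ) :
    (∑ b, w b) * ∑ v : ι → β, (∏ j, w (v j)) * (G v * c (v i))
      = (∑ b, w b * c b) * ∑ v : ι → β, (∏ j, w (v j)) * G v := by
  set s := (Equiv.funSplitAt i β).symm
  have hs_apply : ∀ a u, s (a, u) i = a := fun a u => by simp [s]
  have hs_prod : ∀ a u, ∏ j, w (s (a, u) j) = w a * ∏ j : {j // j ≠ i}, w (u j) := by
    intro a u
    rw [Fintype.prod_eq_mul_prod_subtype_ne _ i, hs_apply]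
    congr 1
    exact Finset.prod_congr rfl fun j _ => by simp [s, j.2]
  have hG_split : ∀ a b u, G (s (a, u)) = G (s (b, u)) :=
    fun a b u => hG fun j hj => by simp [s, Set.mem_compl_singleton_iff.1 hj]
  simp only [← s.sum_comp, Fintype.sum_prod_type, hs_apply, hs_prod, Finset.sum_mul,
    Finset.mul_sum]
  simp only [Finset.sum_comm (s := (Finset.univ : Finset ({j // j ≠ i} → β)))]
  rw [Finset.sum_comm]
  refine Finset.sum_congr rfl fun b _ => Finset.sum_congr rfl fun a _ =>
    Finset.sum_congr rfl fun u _ => ?_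
  rw [hG_split a b u]
  ring

def noiseSum (n : ℕ) (p : ℝ) (F : (Fin n → Bool) → (Fin n → Bool) → (Fin n → Bool) → ℝ) :
    ℝ :=
  ∑ x : Fin n → Bool, ∑ r : Fin n → Bool, ∑ z : Fin n → Bool, wt n p r * F x r z

theorem NS_eq_noiseSum (n : ℕ) (p : ℝ) (g : (Fin n → Bool) → Bool) :
    NS n p g = noiseSum n p (fun x r z => if g x = g (noisy n x r z) then 0 else 1) /
      (2 ^ n * 2 ^ n) := rfl

def coordWt (p : ℝ) (t : Bool × Bool × Bool) : ℝ := if t.2.1 then p else 1 - p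

/-- The coordinates `(x j, r j, z j)` of the three inputs are packed into one coordinate of
`Bool × Bool × Bool`, so that coordinate `i` of all three can be split off at once. -/
theorem noiseSum_eq_sum_pi (n : ℕ) (p : ℝ)
    (F : (Fin n → Bool) → (Fin n → Bool) → (Fin n → Bool) → ℝ) :
    noiseSum n p F = ∑ v : Fin n → Bool × Bool × Bool,
      (∏ j, coordWt p (v j)) *
        F (fun j => (v j).1) (fun j => (v j).2.1) (fun j => (v j).2.2) := by
  rw [← (Equiv.arrowProdEquivProdArrow _ _ _).symm.sum_comp, Fintype.sum_prod_type]
  refine Finset.sum_congr rfl fun x _ => ?_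
  rw [← (Equiv.arrowProdEquivProdArrow _ _ _).symm.sum_comp, Fintype.sum_prod_type]
  rfl

theorem noiseSum_mul_coord_agree (n : ℕ) (p : ℝ)
    (F : (Fin n → Bool) → (Fin n → Bool) → (Fin n → Bool) → ℝ) (i : Fin n) (b : Bool)
    (hF : ∀ x r z x' r' z' : Fin n → Bool,
      (∀ j, j ≠ i → x j = x' j ∧ r j = r' j ∧ z j = z' j) → F x r z = F x' r' z') :
    2 * noiseSum n p (fun x r z => F x r z * if x i = b ∧ noisy n x r z i = b then 1 else 0)
      = (1 - p / 2) * noiseSum n p F := by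
  have hsplit := sum_prod_weight_mul_apply_of_dependsOn (coordWt p)
    (fun t => if t.1 = b ∧ (if t.2.1 then t.2.2 else t.1) = b then 1 else 0)
    (fun v => F (fun j => (v j).1) (fun j => (v j).2.1) (fun j => (v j).2.2)) i
    (fun v v' h => hF _ _ _ _ _ _ fun j hj => by simp [h j hj])
  have hmass : ∑ t, coordWt p t = 4 := by
    simp [coordWt, Fintype.sum_prod_type]; ring
  have hmass_agree :
      ∑ t, coordWt p t * (if t.1 = b ∧ (if t.2.1 then t.2.2 else t.1) = b then 1 else 0)
        = 2 - p := by
    cases b <;> simp [coordWt, Fintype.sum_prod_type] <;> ring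
  rw [hmass, hmass_agree] at hsplit
  rw [noiseSum_eq_sum_pi, noiseSum_eq_sum_pi]
  simp only [noisy]
  linear_combination hsplit / 2

theorem update_eq_update_of_eq_off {ι β : Type*} [DecidableEq ι] {x x' : ι → β} {i : ι}
    (h : ∀ j, j ≠ i → x j = x' j) (b : β) :
    Function.update x i b = Function.update x' i b :=
  Function.update_eq_iff.2 ⟨by simp, fun j hj => by simp [hj, h j hj]⟩

theorem disagree_mul_agree {n : ℕ} (f : (Fin n → Bool) → Bool) (i : Fin n)
    (x y : Fin n → Bool) :
    ((if f x = f y then 0 else 1) * if x i = y i then 1 else 0 : ℝ)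
      = ∑ b : Bool, (if restr n f i b x = restr n f i b y then 0 else 1) *
          if x i = b ∧ y i = b then 1 else 0 := by
  by_cases hxy : x i = y i
  · have hx : Function.update x i (x i) = x := Function.update_eq_self i x
    have hy : Function.update y i (x i) = y := hxy ▸ Function.update_eq_self i y
    rw [Fintype.sum_bool]
    cases hb : x i <;> rw [hb] at hx hy <;> simp [restr, hx, hy, hb, ← hxy]
  · cases hb : x i <;> simp [hb] at hxy ⊢ <;> simp [hxy]

theorem restr_disagree_eq_of_eq_off {n : ℕ} (f : (Fin n → Bool) → Bool) (i : Fin n) (b : Bool)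
    (x r z x' r' z' : Fin n → Bool)
    (h : ∀ j, j ≠ i → x j = x' j ∧ r j = r' j ∧ z j = z' j) :
    (if restr n f i b x = restr n f i b (noisy n x r z) then 0 else 1 : ℝ)
      = if restr n f i b x' = restr n f i b (noisy n x' r' z') then 0 else 1 := by
  have hy : ∀ j, j ≠ i → noisy n x r z j = noisy n x' r' z' j := fun j hj => by
    obtain ⟨hx, hr, hz⟩ := h j hj
    simp [noisy, hx, hr, hz]
  unfold restr
  rw [update_eq_update_of_eq_off (fun j hj => (h j hj).1),
    update_eq_update_of_eq_off hy]

theorem noiseSum_disagree_mul_agree (n : ℕ) (p : ℝ) (f : (Fin n → Bool) → Bool)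
    (i : Fin n) :
    noiseSum n p (fun x r z => (if f x = f (noisy n x r z) then 0 else 1) *
        if x i = noisy n x r z i then 1 else 0) / (2 ^ n * 2 ^ n)
      = (1 - p / 2) * ((NS n p (restr n f i true) + NS n p (restr n f i false)) / 2) := by
  have hagree := fun b => noiseSum_mul_coord_agree n p _ i b (restr_disagree_eq_of_eq_off f i b)
  have hsum : noiseSum n p (fun x r z => (if f x = f (noisy n x r z) then 0 else 1) *
        if x i = noisy n x r z i then 1 else 0)
      = ∑ b : Bool, noiseSum n p (fun x r z =>
          (if restr n f i b x = restr n f i b (noisy n x r z) then 0 else 1) *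
            if x i = b ∧ noisy n x r z i = b then 1 else 0) := by
    simp only [noiseSum, disagree_mul_agree, Fintype.sum_bool, mul_add, Finset.sum_add_distrib]
  rw [hsum, Fintype.sum_bool, NS_eq_noiseSum, NS_eq_noiseSum]
  linear_combination (hagree true + hagree false) / (2 * (2 ^ n * 2 ^ n))

theorem stmt6_general (n : ℕ) (p : ℝ) (hp1 : p < 1)
    (f : (Fin n → Bool) → Bool) (i : Fin n) :
    (∑ x : Fin n → Bool, ∑ r : Fin n → Bool, ∑ z : Fin n → Bool,
        wt n p r *
          ((if f x = f (noisy n x r z) then 0 else 1) *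
            (1 - (1 / (1 - p / 2)) * (if x i = noisy n x r z i then 1 else 0)))) /
      (2 ^ n * 2 ^ n) = score n p f i := by
  have hlin : ∑ x : Fin n → Bool, ∑ r : Fin n → Bool, ∑ z : Fin n → Bool,
        wt n p r * ((if f x = f (noisy n x r z) then 0 else 1) *
          (1 - (1 / (1 - p / 2)) * (if x i = noisy n x r z i then 1 else 0)))
      = noiseSum n p (fun x r z => if f x = f (noisy n x r z) then 0 else 1)
        - 1 / (1 - p / 2) * noiseSum n p (fun x r z => (if f x = f (noisy n x r z) then 0 else 1) *
            if x i = noisy n x r z i then 1 else 0) := by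
    simp only [noiseSum, Finset.mul_sum, ← Finset.sum_sub_distrib]
    exact Finset.sum_congr rfl fun x _ => Finset.sum_congr rfl fun r _ =>
      Finset.sum_congr rfl fun z _ => by ring
  have hκ : 1 - p / 2 ≠ 0 := by linarith
  rw [hlin, sub_div, mul_div_assoc, noiseSum_disagree_mul_agree, score, ← mul_assoc,
    one_div_mul_cancel hκ, one_mul]
  rfl

/-- the unbiased score estimator
`η_i = 1[f(x) ≠ f(y)]·(1 − (1/(1−p/2))·1[x_i = y_i])` satisfies `E[η_i] = Score_i(f,p)`. -/
theorem stmt6 (n : ℕ) (p : ℝ) (hp0 : 0 < p) (hp1 : p < 1)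
    (f : (Fin n → Bool) → Bool) (i : Fin n) :
    (∑ x : Fin n → Bool, ∑ r : Fin n → Bool, ∑ z : Fin n → Bool,
        wt n p r *
          ((if f x = f (noisy n x r z) then 0 else 1) *
            (1 - (1 / (1 - p / 2)) * (if x i = noisy n x r z i then 1 else 0)))) /
      (2 ^ n * 2 ^ n) = score n p f i :=
  stmt6_general n p hp1 f i

end

end DTR
end

section
/- Any decision tree T : {-1,1}^n → {-1,1} of size s (at most s leaves) has total influence Inf(T) := Σ_{i=1}^n Pr_x[T(x) ≠ T(x^{⊕i})] at most log₂ s, where x^{⊕i} denotes x with the i-th bit flipped. -/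
open Finset

attribute [local instance] Classical.propDecidable

namespace DTR

noncomputable section

/-!
Querying `x i` at the root splits the cube into two halves, on which the tree computes its two
subtrees. When the subtrees do not depend on `x i`, coordinate `i` has influence at most `1` and
every other coordinate's influence is the average of its influences in the two subtrees, so
`Inf(T) ≤ 1 + (Inf(l) + Inf(r)) / 2`. As `1 + (log₂ a + log₂ b) / 2 ≤ log₂ (a + b)` (AM–GM),
induction on the tree gives `Inf(T) ≤ log₂ (leaves T)`. Subtrees may query `x i` again, so
the induction runs over the restrictions `x ↦ T.eval (s.piecewise v x)` of `T` to subcubes: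
there a queried coordinate is either fixed, or free at the node and fixed in both subtrees.
-/

def influence (n : ℕ) (g : (Fin n → Bool) → Bool) (i : Fin n) : ℝ :=
  avg n fun x => if g x = g (Function.update x i (!x i)) then 0 else 1

def IndepOfCoord {α : Type*} {n : ℕ} (g : (Fin n → Bool) → α) (i : Fin n) : Prop :=
  ∀ x b, g (Function.update x i b) = g x

section Cube

variable {n : ℕ}

def flipPerm (i : Fin n) : Equiv.Perm (Fin n → Bool) :=
  Function.Involutive.toPerm (fun x => Function.update x i (!x i)) fun x => by simp

@[simp]
lemma flipPerm_apply (i : Fin n) (x : Fin n → Bool) :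
    flipPerm i x = Function.update x i (!x i) :=
  rfl

lemma avg_le_one {f : (Fin n → Bool) → ℝ} (hf : ∀ x, f x ≤ 1) : avg n f ≤ 1 := by
  rw [avg, div_le_one (by positivity)]
  calc ∑ x, f x ≤ ∑ _x : Fin n → Bool, (1 : ℝ) := sum_le_sum fun x _ => hf x
    _ = 2 ^ n := by simp

lemma avg_ite_of_indepOfCoord {i : Fin n} {f₀ f₁ : (Fin n → Bool) → ℝ}
    (h₀ : IndepOfCoord f₀ i) (h₁ : IndepOfCoord f₁ i) :
    avg n (fun x => if x i then f₁ x else f₀ x) = (avg n f₀ + avg n f₁) / 2 := by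
  set f := fun x : Fin n → Bool => if x i then f₁ x else f₀ x
  have hpair : ∀ x, f x + f (flipPerm i x) = f₀ x + f₁ x := by
    intro x
    cases hx : x i <;> simp [f, hx, h₀ x, h₁ x, add_comm]
  have hsum : ∑ x, f x + ∑ x, f (flipPerm i x) = ∑ x, f₀ x + ∑ x, f₁ x := by
    rw [← sum_add_distrib, ← sum_add_distrib]
    exact sum_congr rfl fun x _ => hpair x
  rw [Equiv.sum_comp] at hsum
  have hf : ∑ x, f x = (∑ x, f₀ x + ∑ x, f₁ x) / 2 := by linarith
  simp only [avg, hf]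
  ring

lemma influence_le_one (g : (Fin n → Bool) → Bool) (i : Fin n) : influence n g i ≤ 1 :=
  avg_le_one fun x => by split <;> norm_num

lemma influence_eq_zero_of_indepOfCoord {g : (Fin n → Bool) → Bool} {i : Fin n}
    (hg : IndepOfCoord g i) : influence n g i = 0 := by
  simp [influence, avg, fun x => hg x (!x i)]

lemma influence_ite_of_ne {i j : Fin n} {g₀ g₁ : (Fin n → Bool) → Bool}
    (h₀ : IndepOfCoord g₀ i) (h₁ : IndepOfCoord g₁ i) (hji : j ≠ i) :
    influence n (fun x => if x i then g₁ x else g₀ x) j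
      = (influence n g₀ j + influence n g₁ j) / 2 := by
  have hsens : ∀ g : (Fin n → Bool) → Bool, IndepOfCoord g i →
      IndepOfCoord (fun x => if g x = g (Function.update x j (!x j)) then (0 : ℝ) else 1) i := by
    intro g hg x b
    simp only [Function.update_of_ne hji, Function.update_comm hji.symm]
    rw [hg x, hg]
  simp only [influence]
  rw [← avg_ite_of_indepOfCoord (hsens g₀ h₀) (hsens g₁ h₁)]
  congr 1
  funext x
  simp only [Function.update_of_ne hji.symm]
  split <;> rfl

lemma totalInf_ite_le {i : Fin n} {g₀ g₁ : (Fin n → Bool) → Bool}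
    (h₀ : IndepOfCoord g₀ i) (h₁ : IndepOfCoord g₁ i) :
    totalInf n (fun x => if x i then g₁ x else g₀ x)
      ≤ 1 + (totalInf n g₀ + totalInf n g₁) / 2 := by
  set g := fun x => if x i then g₁ x else g₀ x
  have hcoord : ∀ j, influence n g j
      ≤ (if j = i then 1 else 0) + (influence n g₀ j + influence n g₁ j) / 2 := by
    intro j
    by_cases hji : j = i
    · subst hji
      simp [influence_eq_zero_of_indepOfCoord h₀, influence_eq_zero_of_indepOfCoord h₁,
        influence_le_one]
    · simp [hji, g, influence_ite_of_ne h₀ h₁ hji]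
  calc totalInf n g = ∑ j, influence n g j := rfl
    _ ≤ ∑ j, ((if j = i then 1 else 0) + (influence n g₀ j + influence n g₁ j) / 2) :=
      sum_le_sum fun j _ => hcoord j
    _ = 1 + (totalInf n g₀ + totalInf n g₁) / 2 := by
      rw [sum_add_distrib, sum_ite_eq', ← sum_div, sum_add_distrib]
      simp [totalInf, influence]

lemma indepOfCoord_comp_piecewise {α : Type*} (g : (Fin n → Bool) → α) {s : Finset (Fin n)}
    (v : Fin n → Bool) {i : Fin n} (hi : i ∈ s) :
    IndepOfCoord (fun x => g (s.piecewise v x)) i := fun _ _ =>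
  congrArg g <| s.piecewise_congr (fun _ _ => rfl) fun _ hj =>
    Function.update_of_ne (ne_of_mem_of_not_mem hi hj).symm ..

lemma piecewise_insert_update_eq {s : Finset (Fin n)} {i : Fin n} (hi : i ∉ s)
    (v x : Fin n → Bool) :
    (insert i s).piecewise (Function.update v i (x i)) x = s.piecewise v x := by
  ext j
  rcases eq_or_ne j i with rfl | hj <;> simp [Finset.piecewise, *]

end Cube

lemma one_add_avg_logb_le {a b : ℝ} (ha : 0 < a) (hb : 0 < b) :
    1 + (Real.logb 2 a + Real.logb 2 b) / 2 ≤ Real.logb 2 (a + b) := by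
  have h4 : Real.logb 2 4 = 2 := by
    rw [show (4 : ℝ) = 2 ^ 2 by norm_num, Real.logb_pow, Real.logb_self_eq_one one_lt_two]; ring
  calc 1 + (Real.logb 2 a + Real.logb 2 b) / 2 = Real.logb 2 (4 * a * b) / 2 := by
        rw [Real.logb_mul (by positivity) hb.ne', Real.logb_mul (by norm_num) ha.ne', h4]; ring
    _ ≤ Real.logb 2 ((a + b) ^ 2) / 2 := by
        gcongr
        · norm_num
        · nlinarith [sq_nonneg (a - b)]
    _ = Real.logb 2 (a + b) := by rw [Real.logb_pow]; ring

namespace DTree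

lemma one_le_leaves {n : ℕ} (T : DTree n) : 1 ≤ T.leaves := by
  induction T with
  | leaf => rfl
  | node _ l r => simp only [leaves]; omega

theorem totalInf_eval_piecewise_le {n : ℕ} (T : DTree n) (s : Finset (Fin n))
    (v : Fin n → Bool) :
    totalInf n (fun x => T.eval (s.piecewise v x)) ≤ Real.logb 2 T.leaves := by
  induction T generalizing s v with
  | leaf b => simp [totalInf, eval, avg, leaves]
  | node i l r ihl ihr =>
    have hpos : ∀ T : DTree n, (0 : ℝ) < T.leaves := fun T => by exact_mod_cast T.one_le_leaves
    by_cases hi : i ∈ s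
    · have hanswered : ∀ x, (node i l r).eval (s.piecewise v x)
          = (if v i then r else l).eval (s.piecewise v x) := fun x => by
        simp only [eval, Finset.piecewise_eq_of_mem _ _ _ hi]
        split <;> rfl
      have hmono : ∀ t : DTree n, t.leaves ≤ (node i l r).leaves →
          Real.logb 2 t.leaves ≤ Real.logb 2 (node i l r).leaves := fun t ht =>
        Real.logb_le_logb_of_le one_lt_two (hpos t) (by exact_mod_cast ht)
      simp only [hanswered]
      cases v i
      · exact (ihl s v).trans (hmono l (by simp [leaves]))
      · exact (ihr s v).trans (hmono r (by simp [leaves]))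
    · set g₀ := fun x => l.eval ((insert i s).piecewise (Function.update v i false) x)
      set g₁ := fun x => r.eval ((insert i s).piecewise (Function.update v i true) x)
      have hsplit : (fun x => (node i l r).eval (s.piecewise v x))
          = fun x => if x i then g₁ x else g₀ x := by
        funext x
        cases hx : x i <;> simp [g₀, g₁, eval, hi, hx, ← piecewise_insert_update_eq hi v x]
      rw [hsplit]
      calc _ ≤ 1 + (totalInf n g₀ + totalInf n g₁) / 2 :=
            totalInf_ite_le (indepOfCoord_comp_piecewise _ _ (mem_insert_self i s))
              (indepOfCoord_comp_piecewise _ _ (mem_insert_self i s))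
        _ ≤ 1 + (Real.logb 2 l.leaves + Real.logb 2 r.leaves) / 2 := by
            gcongr
            exacts [ihl _ _, ihr _ _]
        _ ≤ Real.logb 2 (l.leaves + r.leaves) := one_add_avg_logb_le (hpos l) (hpos r)
        _ = Real.logb 2 (node i l r).leaves := by simp [leaves]

end DTree

/-- a size-`s` decision tree has total influence at most `log₂ s`. -/
theorem stmt11 (n s : ℕ) (T : DTree n) (hs : T.leaves ≤ s) :
    totalInf n T.eval ≤ Real.logb 2 s := by
  have hT := T.totalInf_eval_piecewise_le ∅ fun _ => false
  simp only [Finset.piecewise_empty] at hT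
  exact hT.trans (Real.logb_le_logb_of_le one_lt_two (by exact_mod_cast T.one_le_leaves)
    (by exact_mod_cast hs))

end

end DTR
end
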